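/- Let f : ℝ^n → ℝ be differentiable and strongly convex with matrix H ∈ S₊₊ⁿ, let h be proper, closed, and convex, and let C ∈ ℝ^{(m+p)×n}, c ∈ ℝ^{m+p}. Define the dual function d(ν) = min_x { f(x) + h(x) + νᵀ(Cx - c) }. Then d is concave, differentiable with ∇d(ν) = C x*(ν) - c where x*(ν) is the minimizer, and for every symmetric L ⪰ C H⁻¹ Cᵀ and all ν₁, ν₂: d(ν₁) ≥ d(ν₂) + ⟨∇d(ν₂), ν₁ - ν₂⟩ - (1/2)‖ν₁ - ν₂‖²_L. -/

import Mathlib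

/-!
For every `ν₂`, the Lagrangian evaluated at the minimizer `xs ν₂` is affine in `ν` and majorizes
`d`, touching it at `ν₂`: so `d` is concave with supergradient `C xs ν₂ - c`. Strong convexity of
`f` and convexity of `h` make the Lagrangian grow at least like `½ ‖x - xs ν₂‖²_H` away from its
minimizer; evaluating this at `x = xs ν₁` and minimizing the resulting quadratic in
`x - xs ν₂` gives the lower bound with `C H⁻¹ Cᵀ`. Squeezed between its tangent and a quadratic,
`d` is differentiable.
-/

open Matrix

/-- The continuous linear map `w ↦ v ⬝ᵥ w`, used to represent a gradient. -/
noncomputable def dotCLM {n : ℕ} (v : Fin n → ℝ) : (Fin n → ℝ) →L[ℝ] ℝ :=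
  ∑ i, v i • ContinuousLinearMap.proj (R := ℝ) (φ := fun _ : Fin n => ℝ) i

open Asymptotics Filter Topology Set

lemma dotCLM_apply {n : ℕ} (v w : Fin n → ℝ) : dotCLM v w = v ⬝ᵥ w := by
  simp [dotCLM, dotProduct]

lemma EReal.eq_coe_sub_of_coe_eq_coe_add {a b : ℝ} {e : EReal} (he : e ≠ ⊥)
    (h : (b : EReal) = a + e) : e = ((b - a : ℝ) : EReal) := by
  induction e using EReal.rec with
  | bot => exact absurd rfl he
  | coe r => rw [← EReal.coe_add, EReal.coe_eq_coe_iff] at h; simp [h]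
  | top => simp at h

lemma EReal.exists_eq_coe_of_le_coe {s : ℝ} {e : EReal} (he : e ≠ ⊥) (h : e ≤ s) :
    ∃ t : ℝ, e = t ∧ t ≤ s := by
  induction e using EReal.rec with
  | bot => exact absurd rfl he
  | coe r => exact ⟨r, rfl, EReal.coe_le_coe_iff.mp h⟩
  | top => simp at h

lemma add_le_of_forall_add_one_sub_mul_le {a b c : ℝ}
    (h : ∀ θ ∈ Ioc (0 : ℝ) 1, a + (1 - θ) * b ≤ c) : a + b ≤ c := by
  have hlim : Tendsto (fun θ : ℝ => a + (1 - θ) * b) (𝓝[>] 0) (𝓝 (a + b)) := by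
    have hcont : Continuous fun θ : ℝ => a + (1 - θ) * b := by fun_prop
    simpa using (hcont.tendsto 0).mono_left nhdsWithin_le_nhds
  exact le_of_tendsto hlim (eventually_of_mem (Ioc_mem_nhdsGT one_pos) h)

/-- Compare the minimum with the points `θ • x + (1 - θ) • x₀` and let `θ → 0`. -/
lemma IsMinOn.quadratic_growth {E : Type*} [AddCommGroup E] [Module ℝ E]
    {F : E → ℝ} {h : E → EReal} {q : E → ℝ}
    (hF : ∀ (x y : E) (θ : ℝ), 0 ≤ θ → θ ≤ 1 →
      F (θ • x + (1 - θ) • y) + θ * (1 - θ) / 2 * q (x - y) ≤ θ * F x + (1 - θ) * F y)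
    (hbot : ∀ x, h x ≠ ⊥)
    (hconv : ∀ (x y : E) (θ : ℝ), 0 ≤ θ → θ ≤ 1 →
      h (θ • x + (1 - θ) • y) ≤ (θ : EReal) * h x + ((1 - θ : ℝ) : EReal) * h y)
    {x₀ x : E} {r₀ r : ℝ} (hmin : IsMinOn (fun y => (F y : EReal) + h y) univ x₀)
    (hx₀ : h x₀ = r₀) (hx : h x = r) :
    F x₀ + r₀ + q (x - x₀) / 2 ≤ F x + r := by
  refine add_le_of_forall_add_one_sub_mul_le fun θ ⟨hθ0, hθ1⟩ => ?_
  set z := θ • x + (1 - θ) • x₀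
  have hz : h z ≤ ((θ * r + (1 - θ) * r₀ : ℝ) : EReal) := by
    have := hconv x x₀ θ hθ0.le hθ1
    rwa [hx, hx₀, ← EReal.coe_mul, ← EReal.coe_mul, ← EReal.coe_add] at this
  obtain ⟨t, hzt, ht⟩ := EReal.exists_eq_coe_of_le_coe (hbot z) hz
  have hminz : F x₀ + r₀ ≤ F z + t := by
    have := isMinOn_univ_iff.mp hmin z
    rwa [hx₀, hzt, ← EReal.coe_add, ← EReal.coe_add, EReal.coe_le_coe_iff] at this
  have hFz := hF x x₀ θ hθ0.le hθ1
  have key : θ * (F x₀ + r₀ + (1 - θ) * (q (x - x₀) / 2)) ≤ θ * (F x + r) := by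
    nlinarith
  exact le_of_mul_le_mul_left key hθ0

def StronglyConvexWith {ι : Type*} [Fintype ι] (H : Matrix ι ι ℝ) (f : (ι → ℝ) → ℝ)
    (f' : (ι → ℝ) → ι → ℝ) : Prop :=
  ∀ x y, f y + f' y ⬝ᵥ (x - y) + (1 / 2) * ((x - y) ⬝ᵥ H *ᵥ (x - y)) ≤ f x

namespace StronglyConvexWith

variable {ι : Type*} [Fintype ι] {H : Matrix ι ι ℝ} {f : (ι → ℝ) → ℝ} {f' : (ι → ℝ) → ι → ℝ}

lemma add_affine {κ : Type*} [Fintype κ] (hf : StronglyConvexWith H f f')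
    (C : Matrix κ ι ℝ) (c ν : κ → ℝ) :
    StronglyConvexWith H (fun x => f x + ν ⬝ᵥ (C *ᵥ x - c)) (fun x => f' x + ν ᵥ* C) := by
  intro x y
  have := hf x y
  simp only [add_dotProduct, ← dotProduct_mulVec, mulVec_sub, dotProduct_sub] at this ⊢
  linarith

lemma convexComb_le (hf : StronglyConvexWith H f f') (x y : ι → ℝ) {θ : ℝ} (hθ0 : 0 ≤ θ)
    (hθ1 : θ ≤ 1) :
    f (θ • x + (1 - θ) • y) + θ * (1 - θ) / 2 * ((x - y) ⬝ᵥ H *ᵥ (x - y))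
      ≤ θ * f x + (1 - θ) * f y := by
  set z := θ • x + (1 - θ) • y
  have hxz : x - z = (1 - θ) • (x - y) := by ext i; simp [z]; ring
  have hyz : y - z = (-θ) • (x - y) := by ext i; simp [z]; ring
  have hx := hf x z
  have hy := hf y z
  simp only [hxz, hyz, mulVec_smul, dotProduct_smul, smul_dotProduct, smul_eq_mul] at hx hy
  nlinarith [mul_le_mul_of_nonneg_left hx hθ0, mul_le_mul_of_nonneg_left hy (sub_nonneg.mpr hθ1)]

end StronglyConvexWith

/-- The right-hand side is minimized at `w = -H⁻¹ Cᵀ v`. -/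
lemma Matrix.PosDef.neg_half_dotProduct_conj_inv_le {ι κ : Type*} [Fintype ι] [DecidableEq ι]
    [Fintype κ] {H : Matrix ι ι ℝ} (hH : H.PosDef) (C : Matrix κ ι ℝ) (v : κ → ℝ) (w : ι → ℝ) :
    -(1 / 2) * (v ⬝ᵥ (C * H⁻¹ * Cᵀ) *ᵥ v) ≤ v ⬝ᵥ C *ᵥ w + (1 / 2) * (w ⬝ᵥ H *ᵥ w) := by
  set z := H⁻¹ *ᵥ (Cᵀ *ᵥ v)
  have hHz : H *ᵥ z = Cᵀ *ᵥ v := by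
    rw [mulVec_mulVec, mul_nonsing_inv _ ((isUnit_iff_isUnit_det H).mp hH.isUnit), one_mulVec]
  have hHt : Hᵀ = H := hH.isHermitian.eq
  have hsymm : ∀ a b, a ⬝ᵥ H *ᵥ b = b ⬝ᵥ H *ᵥ a := fun a b => by
    rw [dotProduct_mulVec, ← mulVec_transpose, hHt, dotProduct_comm]
  have hCw : v ⬝ᵥ C *ᵥ w = w ⬝ᵥ H *ᵥ z := by
    rw [hHz, dotProduct_mulVec, ← mulVec_transpose, dotProduct_comm]
  have hCz : v ⬝ᵥ (C * H⁻¹ * Cᵀ) *ᵥ v = z ⬝ᵥ H *ᵥ z := by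
    rw [hHz, ← mulVec_mulVec, ← mulVec_mulVec, dotProduct_mulVec, ← mulVec_transpose,
      dotProduct_comm]
  have hnonneg : 0 ≤ (w + z) ⬝ᵥ H *ᵥ (w + z) := by
    simpa using hH.posSemidef.dotProduct_mulVec_nonneg (w + z)
  simp only [mulVec_add, add_dotProduct, dotProduct_add] at hnonneg
  linarith [hsymm z w]

lemma concaveOn_univ_of_le_add_tangent {E : Type*} [AddCommGroup E] [Module ℝ E] {d : E → ℝ}
    (g : E → E →ₗ[ℝ] ℝ) (h : ∀ ν₁ ν₂, d ν₁ ≤ d ν₂ + g ν₂ (ν₁ - ν₂)) : ConcaveOn ℝ univ d := by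
  refine ⟨convex_univ, fun x _ y _ a b ha hb hab => ?_⟩
  set z := a • x + b • y
  have hbalance : a • (x - z) + b • (y - z) = 0 := by
    rw [smul_sub, smul_sub, sub_add_sub_comm, ← add_smul, hab, one_smul]
    exact sub_self z
  have hg : a * g z (x - z) + b * g z (y - z) = 0 := by
    simpa using congrArg (g z) hbalance
  have hx := mul_le_mul_of_nonneg_left (h x z) ha
  have hy := mul_le_mul_of_nonneg_left (h y z) hb
  have hz : a * d z + b * d z = d z := by rw [← add_mul, hab, one_mul]
  rw [mul_add] at hx hy
  simp only [smul_eq_mul]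
  linarith

lemma isLittleO_dotProduct_mulVec_self {ι : Type*} [Fintype ι] [DecidableEq ι]
    (M : Matrix ι ι ℝ) : (fun v : ι → ℝ => v ⬝ᵥ M *ᵥ v) =o[𝓝 0] id := by
  let B : (ι → ℝ) →L[ℝ] (ι → ℝ) →L[ℝ] ℝ := LinearMap.toContinuousLinearMap
    (LinearMap.toContinuousLinearMap.toLinearMap ∘ₗ Matrix.toLinearMap₂' ℝ M)
  refine (isBigO_of_le' (c := ‖B‖) _ fun v => ?_).trans_isLittleO
    (isLittleO_norm_pow_id one_lt_two)
  simpa [B, Matrix.toLinearMap₂'_apply', sq, mul_assoc] using B.le_opNorm₂ v v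

lemma hasFDerivAt_of_le_add_of_sub_le {E : Type*} [NormedAddCommGroup E] [NormedSpace ℝ E]
    {d q : E → ℝ} {g : E →L[ℝ] ℝ} {ν : E} (hq : q =o[𝓝 0] id)
    (hle : ∀ v, d (ν + v) ≤ d ν + g v) (hge : ∀ v, d ν + g v - q v ≤ d (ν + v)) :
    HasFDerivAt d g ν := by
  rw [hasFDerivAt_iff_isLittleO_nhds_zero]
  refine (isBigO_of_le _ fun v => ?_).trans_isLittleO hq
  rw [Real.norm_eq_abs, Real.norm_eq_abs]
  exact (abs_le.mpr ⟨by linarith [hge v], by linarith [hle v, hge v]⟩).trans (le_abs_self _)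

theorem dual_function_quad_lower_bound_general {n m p : ℕ} (f : (Fin n → ℝ) → ℝ)
    (f' : (Fin n → ℝ) → (Fin n → ℝ))
    (H : Matrix (Fin n) (Fin n) ℝ) (hH : H.PosDef)
    (hstrong : ∀ x y, f y + f' y ⬝ᵥ (x - y)
        + (1 / 2) * ((x - y) ⬝ᵥ H.mulVec (x - y)) ≤ f x)
    (h : (Fin n → ℝ) → EReal)
    (hproper_bot : ∀ x, h x ≠ ⊥)
    (hhconv : ∀ (x y : Fin n → ℝ) (θ : ℝ), 0 ≤ θ → θ ≤ 1 →
      h (θ • x + (1 - θ) • y) ≤ (θ : EReal) * h x + ((1 - θ : ℝ) : EReal) * h y)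
    (C : Matrix (Fin (m + p)) (Fin n) ℝ) (c : Fin (m + p) → ℝ)
    (xs : (Fin (m + p) → ℝ) → (Fin n → ℝ))
    (hxs : ∀ ν x, ((f (xs ν) + ν ⬝ᵥ (C.mulVec (xs ν) - c) : ℝ) : EReal) + h (xs ν)
        ≤ ((f x + ν ⬝ᵥ (C.mulVec x - c) : ℝ) : EReal) + h x)
    (d : (Fin (m + p) → ℝ) → ℝ)
    (hd : ∀ ν, (d ν : EReal)
        = ((f (xs ν) + ν ⬝ᵥ (C.mulVec (xs ν) - c) : ℝ) : EReal) + h (xs ν)) :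
    ConcaveOn ℝ Set.univ d ∧
    (∀ ν, HasFDerivAt d (dotCLM (C.mulVec (xs ν) - c)) ν) ∧
    (∀ L : Matrix (Fin (m + p)) (Fin (m + p)) ℝ, L.IsSymm →
      (L - C * H⁻¹ * Cᵀ).PosSemidef →
      ∀ ν₁ ν₂, d ν₂ + (C.mulVec (xs ν₂) - c) ⬝ᵥ (ν₁ - ν₂)
          - (1 / 2) * ((ν₁ - ν₂) ⬝ᵥ L.mulVec (ν₁ - ν₂)) ≤ d ν₁) := by
  have hval ν : h (xs ν) = ((d ν - (f (xs ν) + ν ⬝ᵥ (C *ᵥ xs ν - c)) : ℝ) : EReal) :=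
    EReal.eq_coe_sub_of_coe_eq_coe_add (hproper_bot _) (hd ν)
  have hmin ν : IsMinOn (fun x => ((f x + ν ⬝ᵥ (C *ᵥ x - c) : ℝ) : EReal) + h x) univ (xs ν) :=
    isMinOn_univ_iff.mpr (hxs ν)
  have htangent ν₁ ν₂ : d ν₁ ≤ d ν₂ + (C *ᵥ xs ν₂ - c) ⬝ᵥ (ν₁ - ν₂) := by
    have := isMinOn_univ_iff.mp (hmin ν₁) (xs ν₂)
    rw [← hd, hval, ← EReal.coe_add, EReal.coe_le_coe_iff] at this
    rw [dotProduct_comm, sub_dotProduct]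
    linarith
  have hquad ν₁ ν₂ : d ν₂ + (C *ᵥ xs ν₂ - c) ⬝ᵥ (ν₁ - ν₂)
      - (1 / 2) * ((ν₁ - ν₂) ⬝ᵥ (C * H⁻¹ * Cᵀ) *ᵥ (ν₁ - ν₂)) ≤ d ν₁ := by
    have hgrowth := (hmin ν₂).quadratic_growth (q := fun v => v ⬝ᵥ H *ᵥ v)
      (fun x y _ => (StronglyConvexWith.add_affine hstrong C c ν₂).convexComb_le x y)
      hproper_bot hhconv (hval ν₂) (hval ν₁)
    have hdual := hH.neg_half_dotProduct_conj_inv_le C (ν₁ - ν₂) (xs ν₁ - xs ν₂)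
    rw [dotProduct_comm (C *ᵥ xs ν₂ - c)]
    simp only [mulVec_sub, dotProduct_sub, sub_dotProduct] at hgrowth hdual ⊢
    linarith
  refine ⟨concaveOn_univ_of_le_add_tangent (fun ν => (dotCLM (C *ᵥ xs ν - c) : _ →ₗ[ℝ] ℝ))
      (by simpa [dotCLM_apply] using htangent), fun ν => ?_, fun L _ hL ν₁ ν₂ => ?_⟩
  · refine hasFDerivAt_of_le_add_of_sub_le
      ((isLittleO_dotProduct_mulVec_self (C * H⁻¹ * Cᵀ)).const_mul_left (1 / 2))
      (fun v => ?_) (fun v => ?_)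
    · simpa [dotCLM_apply] using htangent (ν + v) ν
    · simpa [dotCLM_apply] using hquad (ν + v) ν
  · have hLM := hL.dotProduct_mulVec_nonneg (ν₁ - ν₂)
    simp only [star_trivial, sub_mulVec, dotProduct_sub] at hLM
    linarith [hquad ν₁ ν₂]

/-- Theorem 8: the dual function `d(ν) = min_x { f(x) + h(x) + νᵀ(Cx - c) }` is concave,
differentiable with `∇d(ν) = C x*(ν) - c`, and satisfies the quadratic lower bound with
any symmetric `L ⪰ C H⁻¹ Cᵀ`. -/
theorem dual_function_quad_lower_bound {n m p : ℕ} (f : (Fin n → ℝ) → ℝ)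
    (f' : (Fin n → ℝ) → (Fin n → ℝ))
    (H : Matrix (Fin n) (Fin n) ℝ) (hH : H.PosDef)
    (hdiff : ∀ x, HasFDerivAt f (dotCLM (f' x)) x)
    (hstrong : ∀ x y, f y + f' y ⬝ᵥ (x - y)
        + (1 / 2) * ((x - y) ⬝ᵥ H.mulVec (x - y)) ≤ f x)
    (h : (Fin n → ℝ) → EReal)
    (hproper_bot : ∀ x, h x ≠ ⊥) (hproper_top : ∃ x, h x ≠ ⊤)
    (hclosed : LowerSemicontinuous h)
    (hhconv : ∀ (x y : Fin n → ℝ) (θ : ℝ), 0 ≤ θ → θ ≤ 1 →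
      h (θ • x + (1 - θ) • y) ≤ (θ : EReal) * h x + ((1 - θ : ℝ) : EReal) * h y)
    (C : Matrix (Fin (m + p)) (Fin n) ℝ) (c : Fin (m + p) → ℝ)
    (xs : (Fin (m + p) → ℝ) → (Fin n → ℝ))
    (hxs : ∀ ν x, ((f (xs ν) + ν ⬝ᵥ (C.mulVec (xs ν) - c) : ℝ) : EReal) + h (xs ν)
        ≤ ((f x + ν ⬝ᵥ (C.mulVec x - c) : ℝ) : EReal) + h x)
    (d : (Fin (m + p) → ℝ) → ℝ)
    (hd : ∀ ν, (d ν : EReal)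
        = ((f (xs ν) + ν ⬝ᵥ (C.mulVec (xs ν) - c) : ℝ) : EReal) + h (xs ν)) :
    ConcaveOn ℝ Set.univ d ∧
    (∀ ν, HasFDerivAt d (dotCLM (C.mulVec (xs ν) - c)) ν) ∧
    (∀ L : Matrix (Fin (m + p)) (Fin (m + p)) ℝ, L.IsSymm →
      (L - C * H⁻¹ * Cᵀ).PosSemidef →
      ∀ ν₁ ν₂, d ν₂ + (C.mulVec (xs ν₂) - c) ⬝ᵥ (ν₁ - ν₂)
          - (1 / 2) * ((ν₁ - ν₂) ⬝ᵥ L.mulVec (ν₁ - ν₂)) ≤ d ν₁) :=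
  dual_function_quad_lower_bound_general f f' H hH hstrong h hproper_bot hhconv C c xs hxs d hd
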